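/- In Cl(7,0), the associative octonion calibration Φ_O = e₁₂₃ + e₁₄₅ + e₁₆₇ − e₂₄₆ + e₂₅₇ + e₃₄₇ + e₃₅₆ satisfies Φ_O² + 7 = −6·e₁₂₃₄₅₆₇·Φ_O. -/
import Mathlib


open CliffordAlgebra

noncomputable def Q7 : QuadraticForm ℝ (Fin 7 → ℝ) :=
  QuadraticMap.weightedSumSquares ℝ (fun _ : Fin 7 => (1 : ℝ))

/-- `e i` is the `i`-th orthonormal generator of Cl(7,0) (so `e 0` is e₁, …, `e 6` is e₇). -/
noncomputable def e (i : Fin 7) : CliffordAlgebra Q7 := ι Q7 (Pi.single i 1)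
noncomputable def ΦO : CliffordAlgebra Q7 :=
  e 0 * e 1 * e 2 + e 0 * e 3 * e 4 + e 0 * e 5 * e 6 - e 1 * e 3 * e 5 +
    e 1 * e 4 * e 6 + e 2 * e 3 * e 6 + e 2 * e 4 * e 5

lemma esq (i : Fin 7) : e i * e i = 1 := by
  rw [e, ι_sq_scalar]
  have : Q7 (Pi.single i 1) = 1 := by
    simp [Q7, QuadraticMap.weightedSumSquares_apply, Pi.single_apply]
  rw [this, map_one]

lemma eswap {i j : Fin 7} (h : j < i) : e i * e j = -(e j * e i) := by
  have key := ι_mul_ι_add_swap (Q := Q7) (Pi.single i 1) (Pi.single j 1)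
  have hp : QuadraticMap.polar Q7 (Pi.single i 1) (Pi.single j 1) = 0 := by
    simp only [QuadraticMap.polar, Q7, QuadraticMap.weightedSumSquares_apply]
    rw [← Finset.sum_sub_distrib, ← Finset.sum_sub_distrib]
    apply Finset.sum_eq_zero
    intro k _
    rcases eq_or_ne k i with rfl|hi <;> rcases eq_or_ne k j with rfl|hj <;>
      simp_all [Pi.single_apply, h.ne]
  rw [hp, map_zero] at key
  rw [e, e, eq_neg_iff_add_eq_zero]; exact key

lemma esq' (i : Fin 7) (x : CliffordAlgebra Q7) : e i * (e i * x) = x := by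
  rw [← mul_assoc, esq, one_mul]

lemma eswap' {i j : Fin 7} (h : j < i) (x : CliffordAlgebra Q7) :
    e i * (e j * x) = -(e j * (e i * x)) := by
  rw [← mul_assoc, eswap h, neg_mul, mul_assoc]

theorem stmt7 :
    ΦO ^ 2 + 7 = -6 * (e 0 * e 1 * e 2 * e 3 * e 4 * e 5 * e 6) * ΦO := by
  simp only [ΦO, pow_two, sub_eq_add_neg]
  simp only [mul_add, add_mul, neg_mul, mul_neg, neg_add, neg_neg, mul_assoc]
  simp (config := { decide := true }) only [esq, esq', eswap, eswap', mul_one, neg_neg,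
    mul_neg, neg_mul, neg_add]
  abel_nf
  simp only [nsmul_eq_mul, zsmul_eq_mul]
  push_cast
  noncomm_ring
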